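/- Let X be a k-dimensional linear subspace of ℝ^m and let r be a positive integer. Then the linear span in ℝ^m of the set { x^{∘r} : x ∈ X }, where x^{∘r} denotes the coordinatewise r-th power of x, has dimension at most the binomial coefficient C(k + r − 1, r). -/

import Mathlib

/-! Coordinatewise powers are powers in the algebra `Fin m → ℝ`, so `x ^ r` lies in the
submodule power `X ^ r`. If `u₁, …, u_k` span `X`, then `X ^ r` is spanned by the products
`u_{j₁} ⋯ u_{j_r}`, which are indexed by multisets of size `r` over `Fin k`; there are
`C(k + r - 1, r)` of them. -/

open Module Pointwise

theorem Set.range_pow_subset_range_sym_prod {M κ : Type*} [CommMonoid M] (b : κ → M) (n : ℕ) :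
    Set.range b ^ n ⊆ Set.range fun s : Sym κ n => (s.1.map b).prod := by
  intro a ha
  obtain ⟨f, rfl⟩ := Set.mem_pow.mp ha
  choose g hg using fun i => (f i).2
  refine ⟨⟨List.ofFn g, List.length_ofFn⟩, ?_⟩
  simp [List.map_ofFn, Function.comp_def, hg]

namespace Submodule

variable {R A : Type*} [CommRing R] [StrongRankCondition R] [CommRing A] [Algebra R A]

theorem finrank_span_range_pow_le_card_sym {κ : Type*} [Fintype κ] [DecidableEq κ]
    (b : κ → A) (n : ℕ) :
    finrank R ↥(span R (Set.range b) ^ n) ≤ Fintype.card (Sym κ n) := by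
  have : Module.Finite R (span R (Set.range fun s : Sym κ n => (s.1.map b).prod)) :=
    .span_of_finite R (Set.finite_range _)
  rw [span_pow]
  exact (finrank_mono (span_mono (Set.range_pow_subset_range_sym_prod b n))).trans
    (finrank_range_le_card _)

theorem finrank_pow_le_choose (M : Submodule R A) [Module.Free R M] [Module.Finite R M]
    (n : ℕ) : finrank R ↥(M ^ n) ≤ (finrank R M + n - 1).choose n := by
  let b := Module.finBasis R M
  have hM : M = span R (Set.range fun i => (b i : A)) := by
    rw [Set.range_comp', ← coe_subtype, span_image, b.span_eq, map_subtype_top]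
  have := finrank_span_range_pow_le_card_sym (R := R) (fun i => (b i : A)) n
  rwa [← hM, Sym.card_sym_eq_choose, Fintype.card_fin] at this

end Submodule

theorem span_coordinatewise_powers_dim_le_general (m k r : ℕ)
    (X : Submodule ℝ (Fin m → ℝ)) (hX : Module.finrank ℝ X = k) :
    Module.finrank ℝ
      (Submodule.span ℝ
        {y : Fin m → ℝ | ∃ x ∈ X, y = fun i => x i ^ r}) ≤
      (k + r - 1).choose r := by
  have hpowers :
      Submodule.span ℝ {y : Fin m → ℝ | ∃ x ∈ X, y = fun i => x i ^ r} ≤ X ^ r := by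
    rw [Submodule.span_le]
    rintro _ ⟨x, hx, rfl⟩
    exact Submodule.pow_mem_pow X hx r
  calc _ ≤ finrank ℝ ↥(X ^ r) := Submodule.finrank_mono hpowers
    _ ≤ (k + r - 1).choose r := hX ▸ X.finrank_pow_le_choose r

/-- Let `X` be a `k`-dimensional subspace of `ℝ^m` and let `r` be a positive
integer.  Then the linear span in `ℝ^m` of the set `{x^{∘r} : x ∈ X}` of
coordinatewise `r`-th powers of elements of `X` has dimension at most the
binomial coefficient `C(k + r - 1, r)`. -/
theorem span_coordinatewise_powers_dim_le (m k r : ℕ) (hr : 0 < r)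
    (X : Submodule ℝ (Fin m → ℝ)) (hX : Module.finrank ℝ X = k) :
    Module.finrank ℝ
      (Submodule.span ℝ
        {y : Fin m → ℝ | ∃ x ∈ X, y = fun i => x i ^ r}) ≤
      (k + r - 1).choose r :=
  span_coordinatewise_powers_dim_le_general m k r X hX
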